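/- Let α > 0 be a real number, p, q nonnegative integers, and r = p + q. Then for every nonnegative integer k, ∑_{l=0}^{k} C(k,l) · [(l+p)!·(k-l+q)!]^{1+α} / ((l+p+1)²(k-l+q+1)²) ≤ (4π²/3) · [(k+r)!]^{1+α}/(k+r+1)². -/

import Mathlib

/-!
Since `C(k,l) ≤ C(k+p+q, l+p)`, each numerator `C(k,l) · ((l+p)! (k-l+q)!)^(1+α)` is at most
`(C(k,l) (l+p)! (k-l+q)!)^(1+α) ≤ ((k+p+q)!)^(1+α)`. For the denominators, `a = l+p+1` and
`b = k-l+q+1` satisfy `a + b = k+p+q+2`, and `1/(ab) = (1/a + 1/b)/(a+b)` gives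
`1/(a²b²) ≤ 2 (1/a² + 1/b²)/(a+b)²`; summing over `l` and bounding each of the two sums by
`ζ(2) = π²/6` yields `2π²/(3 (k+p+q+2)²)`, which is at most `4π²/(3 (k+p+q+1)²)`.
-/

open Real Finset

theorem Nat.choose_le_choose_add_add (n k m : ℕ) : n.choose k ≤ (n + m).choose (k + m) := by
  induction m with
  | zero => rfl
  | succ m ih => rw [← Nat.add_assoc, ← Nat.add_assoc, Nat.choose_succ_succ']; omega

theorem Nat.choose_mul_factorial_mul_factorial_le {k l : ℕ} (hl : l ≤ k) (p q : ℕ) :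
    k.choose l * ((l + p).factorial * (k - l + q).factorial) ≤ (k + p + q).factorial := by
  have hchoose : k.choose l ≤ (k + p + q).choose (l + p) :=
    (Nat.choose_le_choose_add_add k l p).trans (Nat.choose_le_add _ q _)
  calc k.choose l * ((l + p).factorial * (k - l + q).factorial)
      ≤ (k + p + q).choose (l + p) * ((l + p).factorial * (k - l + q).factorial) := by gcongr
    _ = (k + p + q).factorial := by
      rw [← Nat.choose_mul_factorial_mul_factorial (n := k + p + q) (k := l + p) (by omega),
        show k + p + q - (l + p) = k - l + q by omega, Nat.mul_assoc]

theorem Real.mul_rpow_le_rpow_of_mul_le {C F M s : ℝ} (hC : 1 ≤ C) (hF : 0 ≤ F) (hs : 1 ≤ s)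
    (h : C * F ≤ M) : C * F ^ s ≤ M ^ s :=
  calc C * F ^ s ≤ C ^ s * F ^ s := by gcongr; exact Real.self_le_rpow_of_one_le hC hs
    _ = (C * F) ^ s := (Real.mul_rpow (by linarith) hF).symm
    _ ≤ M ^ s := by gcongr

theorem one_div_sq_mul_sq_le {a b : ℝ} (ha : 0 < a) (hb : 0 < b) :
    1 / (a ^ 2 * b ^ 2) ≤ 2 / (a + b) ^ 2 * (1 / a ^ 2 + 1 / b ^ 2) := by
  rw [div_add_div _ _ (by positivity) (by positivity), div_mul_div_comm,
    div_le_div_iff₀ (by positivity) (by positivity)]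
  nlinarith [sq_nonneg (a - b), mul_pos ha hb, sq_nonneg (a * b)]

theorem sum_range_one_div_add_sq_le (n m : ℕ) :
    ∑ l ∈ range n, (1 : ℝ) / ((l + m : ℕ) : ℝ) ^ 2 ≤ π ^ 2 / 6 := by
  simpa [sum_map] using
    sum_le_hasSum ((range n).map (addRightEmbedding m)) (fun _ _ => by positivity) hasSum_zeta_two

theorem sum_range_one_div_sq_mul_sq_le (k p q : ℕ) :
    ∑ l ∈ range (k + 1), (1 : ℝ) / (((l + p + 1 : ℕ) : ℝ) ^ 2 * ((k - l + q + 1 : ℕ) : ℝ) ^ 2)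
      ≤ 2 * π ^ 2 / (3 * ((k + p + q + 2 : ℕ) : ℝ) ^ 2) := by
  set s : ℝ := ((k + p + q + 2 : ℕ) : ℝ)
  have hreflect : ∑ l ∈ range (k + 1), (1 : ℝ) / ((k - l + q + 1 : ℕ) : ℝ) ^ 2
      = ∑ l ∈ range (k + 1), (1 : ℝ) / ((l + (q + 1) : ℕ) : ℝ) ^ 2 := by
    rw [← sum_range_reflect (fun l => (1 : ℝ) / ((l + (q + 1) : ℕ) : ℝ) ^ 2)]
    refine sum_congr rfl fun l hl => ?_
    rw [show k + 1 - 1 - l + (q + 1) = k - l + q + 1 by have := mem_range.mp hl; omega]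
  calc _ ≤ ∑ l ∈ range (k + 1), 2 / s ^ 2 *
          (1 / ((l + p + 1 : ℕ) : ℝ) ^ 2 + 1 / ((k - l + q + 1 : ℕ) : ℝ) ^ 2) := by
        refine sum_le_sum fun l hl => ?_
        have hsum : ((l + p + 1 : ℕ) : ℝ) + ((k - l + q + 1 : ℕ) : ℝ) = s := by
          rw [← Nat.cast_add]
          congr 1
          have := mem_range.mp hl
          omega
        exact hsum ▸ one_div_sq_mul_sq_le (by positivity) (by positivity)
    _ = 2 / s ^ 2 * (∑ l ∈ range (k + 1), 1 / ((l + (p + 1) : ℕ) : ℝ) ^ 2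
          + ∑ l ∈ range (k + 1), 1 / ((k - l + q + 1 : ℕ) : ℝ) ^ 2) := by
        rw [← mul_sum, sum_add_distrib]; rfl
    _ ≤ 2 / s ^ 2 * (π ^ 2 / 6 + π ^ 2 / 6) := by
        rw [hreflect]
        gcongr <;> exact sum_range_one_div_add_sq_le _ _
    _ = 2 * π ^ 2 / (3 * s ^ 2) := by ring

open Real in
theorem stmt_4 (α : ℝ) (hα : 0 < α) (p q k : ℕ) :
    ∑ l ∈ Finset.range (k + 1),
      (k.choose l : ℝ) * (((l + p).factorial : ℝ) * ((k - l + q).factorial : ℝ)) ^ (1 + α)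
        / (((l + p + 1 : ℕ) : ℝ) ^ 2 * ((k - l + q + 1 : ℕ) : ℝ) ^ 2)
      ≤ (4 * π ^ 2 / 3) * ((k + p + q).factorial : ℝ) ^ (1 + α) / ((k + p + q + 1 : ℕ) : ℝ) ^ 2 := by
  set M : ℝ := ((k + p + q).factorial : ℝ) ^ (1 + α)
  have hnum : ∀ l ∈ range (k + 1),
      (k.choose l : ℝ) * (((l + p).factorial : ℝ) * ((k - l + q).factorial : ℝ)) ^ (1 + α) ≤ M := by
    intro l hl
    have hlk : l ≤ k := Nat.lt_succ_iff.mp (mem_range.mp hl)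
    exact Real.mul_rpow_le_rpow_of_mul_le (by exact_mod_cast Nat.choose_pos hlk) (by positivity)
      (by linarith) (by exact_mod_cast Nat.choose_mul_factorial_mul_factorial_le hlk p q)
  calc _ ≤ ∑ l ∈ range (k + 1),
        M * (1 / (((l + p + 1 : ℕ) : ℝ) ^ 2 * ((k - l + q + 1 : ℕ) : ℝ) ^ 2)) := by
        refine sum_le_sum fun l hl => ?_
        rw [← mul_one_div]
        gcongr
        exact hnum l hl
    _ ≤ M * (2 * π ^ 2 / (3 * ((k + p + q + 2 : ℕ) : ℝ) ^ 2)) := by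
        rw [← mul_sum]
        gcongr
        exact sum_range_one_div_sq_mul_sq_le k p q
    _ ≤ M * (2 * π ^ 2 / (3 * ((k + p + q + 1 : ℕ) : ℝ) ^ 2)) := by gcongr; omega
    _ = 2 / 3 * (π ^ 2 * M / ((k + p + q + 1 : ℕ) : ℝ) ^ 2) := by ring
    _ ≤ 4 / 3 * (π ^ 2 * M / ((k + p + q + 1 : ℕ) : ℝ) ^ 2) := by gcongr; norm_num
    _ = _ := by ring
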